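/- Let p, s ≥ 1, and let (ξ, Ω, Δ, γ, Γ) be unified skew-normal parameters with Ω = D_Ω Ω̄ D_Ω positive definite and the block matrix M = [[Γ, Δᵀ],[Δ, Ω̄]] positive definite, and with Φ_s(γ; Γ) > 0. Then the unified skew-normal density is a probability density: ∫_{ℝ^p} sun(z) dz = 1, where sun is the SUN_{p,s}(ξ, Ω, Δ, γ, Γ) density. -/

import Mathlib

open MeasureTheory Real Matrix

/-- Centered multivariate normal density with covariance `S`. -/
noncomputable def gaussPdf {ι : Type*} [Fintype ι] [DecidableEq ι]
    (S : Matrix ι ι ℝ) (x : ι → ℝ) : ℝ :=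
  (2 * π) ^ (-(Fintype.card ι : ℝ) / 2) * S.det ^ (-(1 : ℝ) / 2) *
    Real.exp (-(1 / 2) * (x ⬝ᵥ S⁻¹.mulVec x))

/-- Centered multivariate normal CDF with covariance `S`, evaluated at `a`. -/
noncomputable def gaussCdf {ι : Type*} [Fintype ι] [DecidableEq ι]
    (S : Matrix ι ι ℝ) (a : ι → ℝ) : ℝ :=
  ∫ t in {t : ι → ℝ | ∀ i, t i ≤ a i}, gaussPdf S t

/-- `D_Ω`: diagonal matrix of square roots of the diagonal of `Ω`. -/
noncomputable def matD {ι : Type*} [Fintype ι] [DecidableEq ι]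
    (Ω : Matrix ι ι ℝ) : Matrix ι ι ℝ :=
  Matrix.diagonal fun i => Real.sqrt (Ω i i)

/-- `Ω̄`: the correlation matrix of `Ω`, so that `Ω = D_Ω Ω̄ D_Ω`. -/
noncomputable def matCorr {ι : Type*} [Fintype ι] [DecidableEq ι]
    (Ω : Matrix ι ι ℝ) : Matrix ι ι ℝ :=
  (matD Ω)⁻¹ * Ω * (matD Ω)⁻¹

/-- Unified skew-normal `SUN(ξ, Ω, Δ, γ, Γ)` density. -/
noncomputable def sunPdf {ι κ : Type*} [Fintype ι] [DecidableEq ι] [Fintype κ] [DecidableEq κ]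
    (ξ : ι → ℝ) (Ω : Matrix ι ι ℝ) (Δ : Matrix ι κ ℝ) (γ : κ → ℝ) (Γ : Matrix κ κ ℝ)
    (z : ι → ℝ) : ℝ :=
  gaussPdf Ω (z - ξ) *
    gaussCdf (Γ - Δᵀ * (matCorr Ω)⁻¹ * Δ)
      (γ + (Δᵀ * (matCorr Ω)⁻¹ * (matD Ω)⁻¹).mulVec (z - ξ)) /
  gaussCdf Γ γ

/-- Standard univariate normal CDF `Φ₁`. -/
noncomputable def stdNormalCdf (a : ℝ) : ℝ :=
  ∫ t in Set.Iic a, (2 * π) ^ (-(1 : ℝ) / 2) * Real.exp (-(t ^ 2) / 2)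

/-!
Write the density as `φ_p(w; Ω) Φ_s(γ + A w; Σ) / Φ_s(γ; Γ)` in `w = z - ξ`, with
`A = Δᵀ Ω̄⁻¹ D_Ω⁻¹` and `Σ = Γ - Δᵀ Ω̄⁻¹ Δ`; `Σ` is positive definite as a Schur complement in `M`,
and `A Ω Aᵀ = Δᵀ Ω̄⁻¹ Δ`. It therefore suffices that
`∫ φ(w; Ω) Φ(γ + A w; Σ) dw = Φ(γ; Σ + A Ω Aᵀ)`.
By Fubini this reduces to the Gaussian convolution identity
`∫ φ(z; Ω) φ(t + A z; Σ) dz = φ(t; Σ + A Ω Aᵀ)`, which follows by completing the square in `z`.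
-/

section ChangeOfVariables
variable {ι E : Type*} [Fintype ι] [DecidableEq ι] [NormedAddCommGroup E]

noncomputable def Matrix.mulVecMeasurableEquiv {B : Matrix ι ι ℝ} (hB : B.det ≠ 0) :
    (ι → ℝ) ≃ᵐ (ι → ℝ) :=
  ((Matrix.toLin' B).equivOfDetNeZero (by rwa [LinearMap.det_toLin'])).toContinuousLinearEquiv
    |>.toHomeomorph.toMeasurableEquiv

lemma map_mulVecMeasurableEquiv_volume {B : Matrix ι ι ℝ} (hB : B.det ≠ 0) :
    Measure.map (Matrix.mulVecMeasurableEquiv hB) volume = ENNReal.ofReal |B.det⁻¹| • volume :=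
  Real.map_matrix_volume_pi_eq_smul_volume_pi hB

theorem integrable_comp_mulVec_iff {B : Matrix ι ι ℝ} (hB : B.det ≠ 0) {f : (ι → ℝ) → E} :
    Integrable (fun x => f (B *ᵥ x)) ↔ Integrable f := by
  have := integrable_map_equiv (μ := volume) (Matrix.mulVecMeasurableEquiv hB) f
  rw [map_mulVecMeasurableEquiv_volume,
    integrable_smul_measure (by simpa using hB) ENNReal.ofReal_ne_top] at this
  exact this.symm

variable [NormedSpace ℝ E]

theorem integral_comp_mulVec {B : Matrix ι ι ℝ} (hB : B.det ≠ 0) (f : (ι → ℝ) → E) :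
    ∫ x, f (B *ᵥ x) = |B.det|⁻¹ • ∫ y, f y := by
  have := integral_map_equiv (μ := volume) (Matrix.mulVecMeasurableEquiv hB) f
  rw [map_mulVecMeasurableEquiv_volume, integral_smul_measure,
    ENNReal.toReal_ofReal (abs_nonneg _), abs_inv] at this
  exact this.symm

end ChangeOfVariables

section GaussianIntegral
variable {ι : Type*} [Fintype ι]

lemma exp_neg_half_sum_sq_eq_prod (x : ι → ℝ) :
    exp (-(1 / 2) * ∑ i, x i ^ 2) = ∏ i, exp (-(1 / 2) * x i ^ 2) := by
  rw [← exp_sum, Finset.mul_sum]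

theorem integrable_exp_neg_half_sum_sq :
    Integrable fun x : ι → ℝ => exp (-(1 / 2) * ∑ i, x i ^ 2) := by
  simp only [exp_neg_half_sum_sq_eq_prod]
  exact Integrable.fintype_prod fun _ => integrable_exp_neg_mul_sq (by norm_num)

theorem integral_exp_neg_half_sum_sq :
    ∫ x : ι → ℝ, exp (-(1 / 2) * ∑ i, x i ^ 2) = (2 * π) ^ ((Fintype.card ι : ℝ) / 2) := by
  simp only [exp_neg_half_sum_sq_eq_prod]
  rw [volume_pi, integral_fintype_prod_eq_pow (fun x : ℝ => exp (-(1 / 2) * x ^ 2)),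
    integral_gaussian, show π / (1 / 2 : ℝ) = 2 * π by ring, sqrt_eq_rpow,
    ← rpow_natCast, ← rpow_mul (by positivity)]
  ring_nf

variable [DecidableEq ι]

lemma Matrix.PosDef.exists_quadForm_eq_sum_sq {R : Matrix ι ι ℝ} (hR : R.PosDef) :
    ∃ B : Matrix ι ι ℝ, B.det ^ 2 = R.det ∧ ∀ x, x ⬝ᵥ R *ᵥ x = ∑ i, (B *ᵥ x) i ^ 2 := by
  open scoped MatrixOrder in
  obtain ⟨B, rfl⟩ := CStarAlgebra.nonneg_iff_eq_star_mul_self.mp hR.posSemidef.nonneg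
  refine ⟨B, by simp [det_mul, sq, star_eq_conjTranspose], fun x => ?_⟩
  rw [← mulVec_mulVec, dotProduct_mulVec, star_eq_conjTranspose, vecMul_conjTranspose]
  simp [dotProduct, sq]

theorem integral_exp_neg_half_quadForm {R : Matrix ι ι ℝ} (hR : R.PosDef) :
    ∫ x : ι → ℝ, exp (-(1 / 2) * (x ⬝ᵥ R *ᵥ x))
      = (2 * π) ^ ((Fintype.card ι : ℝ) / 2) * R.det ^ (-(1 : ℝ) / 2) := by
  obtain ⟨B, hBR, hquad⟩ := hR.exists_quadForm_eq_sum_sq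
  have hB : B.det ≠ 0 := fun h => hR.det_pos.ne' (by rw [← hBR, h, zero_pow two_ne_zero])
  have hdet : |B.det|⁻¹ = R.det ^ (-(1 : ℝ) / 2) := by
    rw [← hBR, ← sq_abs, ← rpow_natCast, ← rpow_mul (abs_nonneg _)]
    norm_num [rpow_neg_one]
  simp only [hquad]
  rw [integral_comp_mulVec hB (fun y => exp (-(1 / 2) * ∑ i, y i ^ 2)),
    integral_exp_neg_half_sum_sq, smul_eq_mul, hdet, mul_comm]

theorem integrable_exp_neg_half_quadForm {R : Matrix ι ι ℝ} (hR : R.PosDef) :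
    Integrable fun x : ι → ℝ => exp (-(1 / 2) * (x ⬝ᵥ R *ᵥ x)) := by
  obtain ⟨B, hBR, hquad⟩ := hR.exists_quadForm_eq_sum_sq
  have hB : B.det ≠ 0 := fun h => hR.det_pos.ne' (by rw [← hBR, h, zero_pow two_ne_zero])
  simp only [hquad]
  exact (integrable_comp_mulVec_iff hB).mpr integrable_exp_neg_half_sum_sq

end GaussianIntegral

section GaussPdf
variable {ι : Type*} [Fintype ι] [DecidableEq ι]

lemma gaussPdf_nonneg {S : Matrix ι ι ℝ} (hS : 0 ≤ S.det) (x : ι → ℝ) : 0 ≤ gaussPdf S x := by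
  unfold gaussPdf
  positivity

lemma continuous_gaussPdf (S : Matrix ι ι ℝ) : Continuous (gaussPdf S) := by
  unfold gaussPdf
  fun_prop

theorem integrable_gaussPdf {S : Matrix ι ι ℝ} (hS : S.PosDef) : Integrable (gaussPdf S) :=
  (integrable_exp_neg_half_quadForm hS.inv).const_mul _

theorem integral_gaussPdf {S : Matrix ι ι ℝ} (hS : S.PosDef) : ∫ x, gaussPdf S x = 1 := by
  have hdet := hS.det_pos
  unfold gaussPdf
  rw [integral_const_mul, integral_exp_neg_half_quadForm hS.inv, det_nonsing_inv,
    Ring.inverse_eq_inv', inv_rpow hdet.le, ← rpow_neg hdet.le, mul_mul_mul_comm,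
    ← rpow_add (by positivity), ← rpow_add hdet]
  ring_nf
  simp

end GaussPdf

lemma Matrix.det_add_mul_mul {n m α : Type*} [Fintype n] [DecidableEq n] [Fintype m]
    [DecidableEq m] [CommRing α] {A : Matrix m m α} {C : Matrix n n α} (U : Matrix m n α)
    (V : Matrix n m α) (hA : IsUnit A.det) (hC : IsUnit C.det) :
    (A + U * C * V).det = A.det * C.det * (C⁻¹ + V * A⁻¹ * U).det := by
  rw [Matrix.mul_assoc U, det_add_mul _ _ hA, mul_assoc, ← det_mul, Matrix.mul_add,
    mul_nonsing_inv _ hC]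
  simp only [Matrix.mul_assoc]

lemma Matrix.mulVec_dotProduct {m n α : Type*} [Fintype m] [Fintype n] [CommSemiring α]
    (A : Matrix m n α) (z : n → α) (w : m → α) : (A *ᵥ z) ⬝ᵥ w = z ⬝ᵥ Aᵀ *ᵥ w := by
  rw [← vecMul_transpose, ← dotProduct_mulVec]

lemma Matrix.quadForm_add {n α : Type*} [Fintype n] [CommSemiring α] {R : Matrix n n α}
    (hR : Rᵀ = R) (x y : n → α) :
    (x + y) ⬝ᵥ R *ᵥ (x + y) = x ⬝ᵥ R *ᵥ x + 2 * (y ⬝ᵥ R *ᵥ x) + y ⬝ᵥ R *ᵥ y := by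
  have hxy : x ⬝ᵥ R *ᵥ y = y ⬝ᵥ R *ᵥ x := by
    rw [← dotProduct_transpose_mulVec, hR]
  simp only [mulVec_add, dotProduct_add, add_dotProduct, hxy]
  ring

lemma Matrix.PosDef.transpose_eq {n : Type*} {R : Matrix n n ℝ} (hR : R.PosDef) : Rᵀ = R :=
  (isHermitian_iff_isSymm.mp hR.1).eq

section GaussianConvolution
variable {ι κ : Type*} [Fintype ι] [DecidableEq ι] [Fintype κ] [DecidableEq κ]
  {Ω : Matrix ι ι ℝ} {Sg : Matrix κ κ ℝ}

lemma Matrix.PosDef.inv_add_transpose_mul_inv_mul (hΩ : Ω.PosDef) (hSg : Sg.PosDef)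
    (A : Matrix κ ι ℝ) : (Ω⁻¹ + Aᵀ * Sg⁻¹ * A).PosDef := by
  simpa [conjTranspose_eq_transpose_of_trivial] using
    hΩ.inv.add_posSemidef (hSg.inv.posSemidef.conjTranspose_mul_mul_same A)

/-- Completing the square in `z`, with `Q = Ω⁻¹ + Aᵀ Σ⁻¹ A` the precision of `z` given `t`;
the remainder is identified by the Woodbury identity. -/
theorem quadForm_add_quadForm_add_mulVec (hΩ : Ω.PosDef) (hSg : Sg.PosDef)
    (A : Matrix κ ι ℝ) (t : κ → ℝ) (z : ι → ℝ) :
    let Q := Ω⁻¹ + Aᵀ * Sg⁻¹ * A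
    z ⬝ᵥ Ω⁻¹ *ᵥ z + (t + A *ᵥ z) ⬝ᵥ Sg⁻¹ *ᵥ (t + A *ᵥ z)
      = t ⬝ᵥ (Sg + A * Ω * Aᵀ)⁻¹ *ᵥ t
        + (z + (Q⁻¹ * Aᵀ * Sg⁻¹) *ᵥ t) ⬝ᵥ Q *ᵥ (z + (Q⁻¹ * Aᵀ * Sg⁻¹) *ᵥ t) := by
  intro Q
  have hQ : Q.PosDef := hΩ.inv_add_transpose_mul_inv_mul hSg A
  have hP : Sg⁻¹ᵀ = Sg⁻¹ := hSg.inv.transpose_eq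
  have hQQ : Q * Q⁻¹ = 1 := mul_nonsing_inv _ hQ.det_pos.ne'.isUnit
  set b := (Aᵀ * Sg⁻¹) *ᵥ t with hb
  have hm : (Q⁻¹ * Aᵀ * Sg⁻¹) *ᵥ t = Q⁻¹ *ᵥ b := by
    rw [Matrix.mul_assoc, ← mulVec_mulVec]
  rw [hm, quadForm_add hP, quadForm_add hQ.transpose_eq]
  have hWoodbury : (Sg + A * Ω * Aᵀ)⁻¹ = Sg⁻¹ - Sg⁻¹ * A * Q⁻¹ * Aᵀ * Sg⁻¹ :=
    add_mul_mul_inv_eq_sub _ _ _ _ hSg.isUnit hΩ.isUnit hQ.isUnit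
  have hAzAz : (A *ᵥ z) ⬝ᵥ Sg⁻¹ *ᵥ (A *ᵥ z) = z ⬝ᵥ (Aᵀ * Sg⁻¹ * A) *ᵥ z := by
    rw [mulVec_dotProduct, mulVec_mulVec, mulVec_mulVec, Matrix.mul_assoc]
  have hzQz : z ⬝ᵥ Q *ᵥ z = z ⬝ᵥ Ω⁻¹ *ᵥ z + z ⬝ᵥ (Aᵀ * Sg⁻¹ * A) *ᵥ z := by
    rw [add_mulVec, dotProduct_add]
  have hAzt : (A *ᵥ z) ⬝ᵥ Sg⁻¹ *ᵥ t = z ⬝ᵥ b := by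
    rw [mulVec_dotProduct, mulVec_mulVec]
  have hQm : Q *ᵥ (Q⁻¹ *ᵥ b) = b := by rw [mulVec_mulVec, hQQ, one_mulVec]
  have hmQz : (Q⁻¹ *ᵥ b) ⬝ᵥ Q *ᵥ z = z ⬝ᵥ b := by
    rw [← dotProduct_transpose_mulVec, hQ.transpose_eq, hQm]
  have hbb : t ⬝ᵥ (Sg⁻¹ * A * Q⁻¹ * Aᵀ * Sg⁻¹) *ᵥ t = (Q⁻¹ *ᵥ b) ⬝ᵥ Q *ᵥ (Q⁻¹ *ᵥ b) := by
    rw [hQm, dotProduct_comm (Q⁻¹ *ᵥ b), hb, mulVec_dotProduct, mulVec_mulVec, mulVec_mulVec,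
      transpose_mul, transpose_transpose, hP]
    simp only [Matrix.mul_assoc]
  rw [hWoodbury, sub_mulVec, dotProduct_sub, hAzAz, hzQz, hAzt, hmQz, ← hbb]
  ring

/-- For independent `z ~ N(0, Ω)` and `u ~ N(0, Σ)`, the joint density of `(z, t)` with
`t = u - A z` splits into the marginal density of `t` and the conditional density of `z`. -/
theorem gaussPdf_mul_gaussPdf_add_mulVec (hΩ : Ω.PosDef) (hSg : Sg.PosDef) (A : Matrix κ ι ℝ)
    (t : κ → ℝ) (z : ι → ℝ) :
    let Q := Ω⁻¹ + Aᵀ * Sg⁻¹ * A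
    gaussPdf Ω z * gaussPdf Sg (t + A *ᵥ z)
      = gaussPdf (Sg + A * Ω * Aᵀ) t * gaussPdf Q⁻¹ (z + (Q⁻¹ * Aᵀ * Sg⁻¹) *ᵥ t) := by
  intro Q
  have hQ : Q.PosDef := hΩ.inv_add_transpose_mul_inv_mul hSg A
  have hexp : exp (-(1 / 2) * (z ⬝ᵥ Ω⁻¹ *ᵥ z))
        * exp (-(1 / 2) * ((t + A *ᵥ z) ⬝ᵥ Sg⁻¹ *ᵥ (t + A *ᵥ z)))
      = exp (-(1 / 2) * (t ⬝ᵥ (Sg + A * Ω * Aᵀ)⁻¹ *ᵥ t))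
        * exp (-(1 / 2) * ((z + (Q⁻¹ * Aᵀ * Sg⁻¹) *ᵥ t) ⬝ᵥ Q *ᵥ (z + (Q⁻¹ * Aᵀ * Sg⁻¹) *ᵥ t))) := by
    rw [← exp_add, ← exp_add, ← mul_add, ← mul_add, quadForm_add_quadForm_add_mulVec hΩ hSg]
  have hdet : Ω.det ^ (-(1 : ℝ) / 2) * Sg.det ^ (-(1 : ℝ) / 2)
      = (Sg + A * Ω * Aᵀ).det ^ (-(1 : ℝ) / 2) * Q⁻¹.det ^ (-(1 : ℝ) / 2) := by
    rw [det_add_mul_mul _ _ hSg.det_pos.ne'.isUnit hΩ.det_pos.ne'.isUnit, det_nonsing_inv,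
      Ring.inverse_eq_inv', ← mul_rpow hΩ.det_pos.le hSg.det_pos.le,
      ← mul_rpow (mul_pos (mul_pos hSg.det_pos hΩ.det_pos) hQ.det_pos).le
        (inv_nonneg.mpr hQ.det_pos.le),
      mul_inv_cancel_right₀ hQ.det_pos.ne', mul_comm]
  unfold gaussPdf
  rw [nonsing_inv_nonsing_inv _ hQ.det_pos.ne'.isUnit]
  calc _ = (2 * π) ^ (-(Fintype.card ι : ℝ) / 2) * (2 * π) ^ (-(Fintype.card κ : ℝ) / 2)
          * (Ω.det ^ (-(1 : ℝ) / 2) * Sg.det ^ (-(1 : ℝ) / 2))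
          * (exp (-(1 / 2) * (z ⬝ᵥ Ω⁻¹ *ᵥ z))
            * exp (-(1 / 2) * ((t + A *ᵥ z) ⬝ᵥ Sg⁻¹ *ᵥ (t + A *ᵥ z)))) := by ring
    _ = _ := by rw [hdet, hexp]; ring

theorem integral_gaussPdf_mul_gaussPdf_add_mulVec (hΩ : Ω.PosDef) (hSg : Sg.PosDef)
    (A : Matrix κ ι ℝ) (t : κ → ℝ) :
    ∫ z, gaussPdf Ω z * gaussPdf Sg (t + A *ᵥ z) = gaussPdf (Sg + A * Ω * Aᵀ) t := by
  simp only [gaussPdf_mul_gaussPdf_add_mulVec hΩ hSg A t]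
  rw [integral_const_mul, integral_add_right_eq_self,
    integral_gaussPdf (hΩ.inv_add_transpose_mul_inv_mul hSg A).inv, mul_one]

lemma integrable_gaussPdf_mul_gaussPdf_add_mulVec_prod (hΩ : Ω.PosDef) (hSg : Sg.PosDef)
    (A : Matrix κ ι ℝ) :
    Integrable (fun p : (ι → ℝ) × (κ → ℝ) => gaussPdf Ω p.1 * gaussPdf Sg (p.2 + A *ᵥ p.1))
      (volume.prod volume) := by
  have hcont : Continuous fun p : (ι → ℝ) × (κ → ℝ) =>
      gaussPdf Ω p.1 * gaussPdf Sg (p.2 + A *ᵥ p.1) :=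
    (continuous_gaussPdf Ω).fst'.mul
      ((continuous_gaussPdf Sg).comp
        (continuous_snd.add (continuous_const.matrix_mulVec continuous_fst)))
  rw [integrable_prod_iff hcont.aestronglyMeasurable]
  refine ⟨.of_forall fun w =>
    ((integrable_gaussPdf hSg).comp_add_right (A *ᵥ w)).const_mul (gaussPdf Ω w), ?_⟩
  refine (integrable_gaussPdf hΩ).congr (.of_forall fun w => ?_)
  simp only [norm_mul, Real.norm_of_nonneg (gaussPdf_nonneg hΩ.det_pos.le _),
    Real.norm_of_nonneg (gaussPdf_nonneg hSg.det_pos.le _)]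
  rw [integral_const_mul, integral_add_right_eq_self, integral_gaussPdf hSg, mul_one]

lemma gaussCdf_add (S : Matrix κ κ ℝ) (a b : κ → ℝ) :
    gaussCdf S (a + b) = ∫ t in Set.Iic a, gaussPdf S (t + b) := by
  rw [gaussCdf, ← add_sub_cancel_right a b, ← Set.preimage_add_const_Iic,
    (measurePreserving_add_right volume b).setIntegral_preimage_emb
      (measurableEmbedding_addRight b), add_sub_cancel_right]
  rfl

theorem integral_gaussPdf_mul_gaussCdf_add_mulVec (hΩ : Ω.PosDef) (hSg : Sg.PosDef)
    (A : Matrix κ ι ℝ) (γ : κ → ℝ) :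
    ∫ w, gaussPdf Ω w * gaussCdf Sg (γ + A *ᵥ w) = gaussCdf (Sg + A * Ω * Aᵀ) γ := by
  have hint : Integrable (Function.uncurry fun w (t : κ → ℝ) =>
      gaussPdf Ω w * gaussPdf Sg (t + A *ᵥ w)) (volume.prod (volume.restrict (Set.Iic γ))) := by
    have := (integrable_gaussPdf_mul_gaussPdf_add_mulVec_prod hΩ hSg A).restrict
      (s := Set.univ ×ˢ Set.Iic γ)
    rwa [← Measure.prod_restrict, Measure.restrict_univ] at this
  calc ∫ w, gaussPdf Ω w * gaussCdf Sg (γ + A *ᵥ w)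
      = ∫ w, ∫ t in Set.Iic γ, gaussPdf Ω w * gaussPdf Sg (t + A *ᵥ w) := by
        simp only [gaussCdf_add, integral_const_mul]
    _ = ∫ t in Set.Iic γ, ∫ w, gaussPdf Ω w * gaussPdf Sg (t + A *ᵥ w) :=
        integral_integral_swap hint
    _ = gaussCdf (Sg + A * Ω * Aᵀ) γ := by
        simp only [integral_gaussPdf_mul_gaussPdf_add_mulVec hΩ hSg]
        rfl

end GaussianConvolution

theorem Matrix.PosDef.sub_mul_inv_mul_conjTranspose {m n K : Type*} [Fintype m] [Fintype n]
    [DecidableEq n] [Field K] [PartialOrder K] [StarRing K] [StarOrderedRing K] {A : Matrix m m K}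
    {B : Matrix m n K} {D : Matrix n n K} (h : (fromBlocks A B Bᴴ D).PosDef) :
    (A - B * D⁻¹ * Bᴴ).PosDef := by
  have hD : D.PosDef := h.submatrix Sum.inr_injective
  let := hD.isUnit.invertible
  refine .of_dotProduct_mulVec_pos ((PosDef.fromBlocks₂₂ A B hD).mp h.posSemidef).1
    fun x hx => ?_
  have hv : x ⊕ᵥ -((D⁻¹ * Bᴴ) *ᵥ x) ≠ 0 := fun h0 =>
    hx (funext fun i => by simpa using congrFun h0 (Sum.inl i))
  have := h.dotProduct_mulVec_pos hv
  rwa [dotProduct_mulVec, schur_complement_eq₂₂ A B x _ hD.1, add_neg_cancel, dotProduct_zero,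
    zero_add, ← dotProduct_mulVec] at this

section SunParameters
variable {ι κ : Type*} [Fintype ι] [DecidableEq ι] {Ω : Matrix ι ι ℝ}

lemma isUnit_det_matD (h : ∀ i, 0 < Ω i i) : IsUnit (matD Ω).det := by
  rw [matD, det_diagonal]
  exact (Finset.prod_pos fun i _ => sqrt_pos.mpr (h i)).ne'.isUnit

lemma transpose_inv_matD : (matD Ω)⁻¹ᵀ = (matD Ω)⁻¹ := by
  rw [transpose_nonsing_inv, matD, diagonal_transpose]

lemma matD_mul_matCorr_mul_matD (h : ∀ i, 0 < Ω i i) : matD Ω * matCorr Ω * matD Ω = Ω := by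
  have hD := isUnit_det_matD h
  rw [matCorr, Matrix.mul_assoc, Matrix.mul_assoc, nonsing_inv_mul _ hD, Matrix.mul_one,
    mul_nonsing_inv_cancel_left _ _ hD]

theorem Matrix.PosDef.matCorr (hΩ : Ω.PosDef) : (matCorr Ω).PosDef := by
  have hD := isUnit_det_matD fun _ => hΩ.diag_pos
  have h : _root_.matCorr Ω = (matD Ω)⁻¹ᴴ * Ω * (matD Ω)⁻¹ := by
    rw [conjTranspose_eq_transpose_of_trivial, transpose_inv_matD, _root_.matCorr]
  rw [h]
  exact hΩ.conjTranspose_mul_mul_same <| mulVec_injective_iff_isUnit.mpr <|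
    (isUnit_iff_isUnit_det _).mpr (isUnit_nonsing_inv_det _ hD)

lemma mul_mul_transpose_eq_transpose_mul_inv_matCorr_mul (hΩ : Ω.PosDef) (Δ : Matrix ι κ ℝ) :
    (Δᵀ * (matCorr Ω)⁻¹ * (matD Ω)⁻¹) * Ω * (Δᵀ * (matCorr Ω)⁻¹ * (matD Ω)⁻¹)ᵀ
      = Δᵀ * (matCorr Ω)⁻¹ * Δ := by
  have hdiag : ∀ i, 0 < Ω i i := fun _ => hΩ.diag_pos
  have hD := isUnit_det_matD hdiag
  have hC := hΩ.matCorr.det_pos.ne'.isUnit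
  have hCinv : (matCorr Ω)⁻¹ᵀ = (matCorr Ω)⁻¹ := hΩ.matCorr.inv.transpose_eq
  rw [transpose_mul, transpose_mul, transpose_transpose, transpose_inv_matD, hCinv]
  conv_lhs => enter [1, 2]; rw [← matD_mul_matCorr_mul_matD hdiag]
  simp only [Matrix.mul_assoc, nonsing_inv_mul_cancel_left _ _ hD,
    mul_nonsing_inv_cancel_left _ _ hD, mul_nonsing_inv_cancel_left _ _ hC]

end SunParameters

theorem sunPdf_integrates_to_one_general (p s : ℕ)
    (ξ : Fin p → ℝ) (Ω : Matrix (Fin p) (Fin p) ℝ) (hΩ : Ω.PosDef)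
    (Δ : Matrix (Fin p) (Fin s) ℝ) (γ : Fin s → ℝ) (Γ : Matrix (Fin s) (Fin s) ℝ)
    (hM : (Matrix.fromBlocks Γ Δᵀ Δ (matCorr Ω)).PosDef)
    (hγ : 0 < gaussCdf Γ γ) :
    ∫ z : Fin p → ℝ, sunPdf ξ Ω Δ γ Γ z = 1 := by
  have hM' : (fromBlocks Γ Δᵀ Δᵀᴴ (matCorr Ω)).PosDef := by
    rwa [conjTranspose_eq_transpose_of_trivial, transpose_transpose]
  have hSchur : (Γ - Δᵀ * (matCorr Ω)⁻¹ * Δ).PosDef := by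
    simpa only [conjTranspose_eq_transpose_of_trivial, transpose_transpose] using
      hM'.sub_mul_inv_mul_conjTranspose
  simp only [sunPdf]
  rw [integral_div, integral_sub_right_eq_self (fun w => gaussPdf Ω w *
      gaussCdf (Γ - Δᵀ * (matCorr Ω)⁻¹ * Δ) (γ + (Δᵀ * (matCorr Ω)⁻¹ * (matD Ω)⁻¹) *ᵥ w)),
    integral_gaussPdf_mul_gaussCdf_add_mulVec hΩ hSchur,
    mul_mul_transpose_eq_transpose_mul_inv_matCorr_mul hΩ, sub_add_cancel, div_self hγ.ne']

/-- the unified skew-normal density integrates to one. -/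
theorem sunPdf_integrates_to_one (p s : ℕ) (hp : 1 ≤ p) (hs : 1 ≤ s)
    (ξ : Fin p → ℝ) (Ω : Matrix (Fin p) (Fin p) ℝ) (hΩ : Ω.PosDef)
    (Δ : Matrix (Fin p) (Fin s) ℝ) (γ : Fin s → ℝ) (Γ : Matrix (Fin s) (Fin s) ℝ)
    (hM : (Matrix.fromBlocks Γ Δᵀ Δ (matCorr Ω)).PosDef)
    (hγ : 0 < gaussCdf Γ γ) :
    ∫ z : Fin p → ℝ, sunPdf ξ Ω Δ γ Γ z = 1 :=
  sunPdf_integrates_to_one_general p s ξ Ω hΩ Δ γ Γ hM hγ
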